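/- arXiv:2201.09143 — 3 statements merged into one kernel-verified Lean document; each statement's English description precedes it below -/
import Mathlib

section
/- (Schur orthogonality, inequivalent case) Let (H₁, ρ₁) and (H₂, ρ₂) be finite-dimensional irreducible unitary representations of a compact topological group G that are not equivalent (i.e. there is no bijective intertwining operator between them), and let dg denote the normalized Haar measure on G. Then for all x₁, y₁ ∈ H₁ and x₂, y₂ ∈ H₂, the matrix coefficients are orthogonal in L²(G): ∫_G conj(⟨x₁, ρ₁(g)y₁⟩) · ⟨x₂, ρ₂(g)y₂⟩ dg = 0. -/
/-!
Averaging the rank-one operator `v ↦ ⟪y₁, v⟫ • y₂` over the group,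
`T = ∫ ρ₂ g ∘ (⟪y₁, ·⟫ • y₂) ∘ ρ₁ g⁻¹ dμ`, produces an intertwining operator by left
invariance of the Haar measure. By Schur's lemma a nonzero intertwiner between irreducible
representations is bijective, so inequivalence forces `T = 0`. Unitarity of `ρ₁` identifies
`⟪x₂, T x₁⟫` with the integral of `conj ⟪x₁, ρ₁ g y₁⟫ * ⟪x₂, ρ₂ g y₂⟫`.
-/

open scoped InnerProductSpace
open MeasureTheory

theorem LinearMap.bijective_of_intertwines_of_ne_zero {G k V₁ V₂ : Type*} [Group G] [Field k]
    [AddCommGroup V₁] [Module k V₁] [AddCommGroup V₂] [Module k V₂]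
    {ρ₁ : G →* (V₁ ≃ₗ[k] V₁)} {ρ₂ : G →* (V₂ ≃ₗ[k] V₂)}
    (h₁irr : ∀ W : Submodule k V₁, (∀ (g : G), ∀ x ∈ W, ρ₁ g x ∈ W) → W = ⊥ ∨ W = ⊤)
    (h₂irr : ∀ W : Submodule k V₂, (∀ (g : G), ∀ x ∈ W, ρ₂ g x ∈ W) → W = ⊥ ∨ W = ⊤)
    {T : V₁ →ₗ[k] V₂} (hT : ∀ (g : G) (x : V₁), T (ρ₁ g x) = ρ₂ g (T x)) (hT0 : T ≠ 0) :
    Function.Bijective T := by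
  have hker : LinearMap.ker T = ⊥ := by
    refine (h₁irr _ fun g x hx => ?_).resolve_right (mt LinearMap.ker_eq_top.mp hT0)
    rw [LinearMap.mem_ker] at hx ⊢
    rw [hT, hx, map_zero]
  have hrange : LinearMap.range T = ⊤ := by
    refine (h₂irr _ ?_).resolve_left (mt LinearMap.range_eq_bot.mp hT0)
    rintro g _ ⟨v, rfl⟩
    exact ⟨ρ₁ g v, hT g v⟩
  exact ⟨LinearMap.ker_eq_bot.mp hker, LinearMap.range_eq_top.mp hrange⟩

section Averaging

variable {G H₁ H₂ : Type*} [Group G] [TopologicalSpace G] [IsTopologicalGroup G] [CompactSpace G]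
  [MeasurableSpace G] [BorelSpace G] (μ : Measure G) [IsFiniteMeasure μ]
  [NormedAddCommGroup H₁] [InnerProductSpace ℂ H₁]
  [NormedAddCommGroup H₂] [InnerProductSpace ℂ H₂]
  (ρ₁ : G →* (H₁ ≃ₗ[ℂ] H₁)) (ρ₂ : G →* (H₂ ≃ₗ[ℂ] H₂))

theorem integrable_inner_smul_apply (h₁cont : ∀ x : H₁, Continuous fun g => ρ₁ g x)
    (h₂cont : ∀ x : H₂, Continuous fun g => ρ₂ g x) (y₁ v : H₁) (y₂ : H₂) :
    Integrable (fun g => ⟪y₁, ρ₁ g⁻¹ v⟫_ℂ • ρ₂ g y₂) μ :=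
  ((continuous_const.inner ((h₁cont v).comp continuous_inv)).smul
    (h₂cont y₂)).integrable_of_hasCompactSupport (HasCompactSupport.of_compactSpace _)

noncomputable def averagedRankOne (h₁cont : ∀ x : H₁, Continuous fun g => ρ₁ g x)
    (h₂cont : ∀ x : H₂, Continuous fun g => ρ₂ g x) (y₁ : H₁) (y₂ : H₂) : H₁ →ₗ[ℂ] H₂ where
  toFun v := ∫ g, ⟪y₁, ρ₁ g⁻¹ v⟫_ℂ • ρ₂ g y₂ ∂μ
  map_add' u v := by
    simp only [map_add, inner_add_right, add_smul]
    exact integral_add (integrable_inner_smul_apply μ ρ₁ ρ₂ h₁cont h₂cont y₁ u y₂)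
      (integrable_inner_smul_apply μ ρ₁ ρ₂ h₁cont h₂cont y₁ v y₂)
  map_smul' c v := by
    simp only [map_smul, inner_smul_right, RingHom.id_apply]
    rw [← integral_smul]
    simp only [smul_smul]

variable (h₁cont : ∀ x : H₁, Continuous fun g => ρ₁ g x)
  (h₂cont : ∀ x : H₂, Continuous fun g => ρ₂ g x)

theorem averagedRankOne_apply (y₁ v : H₁) (y₂ : H₂) :
    averagedRankOne μ ρ₁ ρ₂ h₁cont h₂cont y₁ y₂ v = ∫ g, ⟪y₁, ρ₁ g⁻¹ v⟫_ℂ • ρ₂ g y₂ ∂μ :=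
  rfl

theorem averagedRankOne_intertwines [μ.IsMulLeftInvariant] [FiniteDimensional ℂ H₂]
    (y₁ : H₁) (y₂ : H₂) (h : G) (v : H₁) :
    averagedRankOne μ ρ₁ ρ₂ h₁cont h₂cont y₁ y₂ (ρ₁ h v) =
      ρ₂ h (averagedRankOne μ ρ₁ ρ₂ h₁cont h₂cont y₁ y₂ v) := by
  rw [averagedRankOne_apply, averagedRankOne_apply, ← integral_mul_left_eq_self _ h]
  have hshift : ∀ g : G, ⟪y₁, ρ₁ (h * g)⁻¹ (ρ₁ h v)⟫_ℂ • ρ₂ (h * g) y₂ =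
      (ρ₂ h).toContinuousLinearEquiv (⟪y₁, ρ₁ g⁻¹ v⟫_ℂ • ρ₂ g y₂) := by
    intro g
    simp [mul_inv_rev, map_smul]
  simp only [hshift, ContinuousLinearEquiv.integral_comp_comm]
  rfl

theorem inner_averagedRankOne [CompleteSpace H₂]
    (h₁unitary : ∀ (g : G) (x y : H₁), ⟪ρ₁ g x, ρ₁ g y⟫_ℂ = ⟪x, y⟫_ℂ)
    (x₁ y₁ : H₁) (x₂ y₂ : H₂) :
    ⟪x₂, averagedRankOne μ ρ₁ ρ₂ h₁cont h₂cont y₁ y₂ x₁⟫_ℂ =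
      ∫ g, (starRingEnd ℂ) ⟪x₁, ρ₁ g y₁⟫_ℂ * ⟪x₂, ρ₂ g y₂⟫_ℂ ∂μ := by
  rw [averagedRankOne_apply,
    ← integral_inner (integrable_inner_smul_apply μ ρ₁ ρ₂ h₁cont h₂cont y₁ x₁ y₂)]
  congr 1
  funext g
  have hconj : (starRingEnd ℂ) ⟪x₁, ρ₁ g y₁⟫_ℂ = ⟪y₁, ρ₁ g⁻¹ x₁⟫_ℂ := by
    rw [inner_conj_symm, ← h₁unitary g⁻¹ (ρ₁ g y₁) x₁]
    simp
  rw [hconj, inner_smul_right]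

end Averaging

theorem stmt3_general {G : Type*} [Group G] [TopologicalSpace G] [IsTopologicalGroup G] [CompactSpace G]
    [MeasurableSpace G] [BorelSpace G]
    (μ : Measure G) [IsProbabilityMeasure μ] [μ.IsMulLeftInvariant]
    {H₁ H₂ : Type*} [NormedAddCommGroup H₁] [InnerProductSpace ℂ H₁] [FiniteDimensional ℂ H₁]
    [NormedAddCommGroup H₂] [InnerProductSpace ℂ H₂] [FiniteDimensional ℂ H₂]
    (ρ₁ : G →* (H₁ ≃ₗ[ℂ] H₁)) (ρ₂ : G →* (H₂ ≃ₗ[ℂ] H₂))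
    (h₁cont : ∀ x : H₁, Continuous fun g => ρ₁ g x)
    (h₂cont : ∀ x : H₂, Continuous fun g => ρ₂ g x)
    (h₁unitary : ∀ (g : G) (x y : H₁), ⟪ρ₁ g x, ρ₁ g y⟫_ℂ = ⟪x, y⟫_ℂ)
    (h₁irr : Nontrivial H₁ ∧
      ∀ W : Submodule ℂ H₁, (∀ (g : G), ∀ x ∈ W, ρ₁ g x ∈ W) → W = ⊥ ∨ W = ⊤)
    (h₂irr : Nontrivial H₂ ∧
      ∀ W : Submodule ℂ H₂, (∀ (g : G), ∀ x ∈ W, ρ₂ g x ∈ W) → W = ⊥ ∨ W = ⊤)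
    (hinequiv : ¬ ∃ T : H₁ →L[ℂ] H₂,
      (∀ (g : G) (x : H₁), T (ρ₁ g x) = ρ₂ g (T x)) ∧ Function.Bijective T)
    (x₁ y₁ : H₁) (x₂ y₂ : H₂) :
    ∫ g, (starRingEnd ℂ) ⟪x₁, ρ₁ g y₁⟫_ℂ * ⟪x₂, ρ₂ g y₂⟫_ℂ ∂μ = 0 := by
  have hT := averagedRankOne_intertwines μ ρ₁ ρ₂ h₁cont h₂cont y₁ y₂
  have hT0 : averagedRankOne μ ρ₁ ρ₂ h₁cont h₂cont y₁ y₂ = 0 := by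
    by_contra hne
    exact hinequiv ⟨LinearMap.toContinuousLinearMap _, hT,
      LinearMap.bijective_of_intertwines_of_ne_zero h₁irr.2 h₂irr.2 hT hne⟩
  rw [← inner_averagedRankOne μ ρ₁ ρ₂ h₁cont h₂cont h₁unitary, hT0, LinearMap.zero_apply,
    inner_zero_right]

/-- Schur orthogonality, inequivalent case: the matrix coefficients of two inequivalent
finite-dimensional irreducible unitary representations of a compact group are orthogonal
with respect to the normalized Haar measure. -/
theorem stmt3 {G : Type*} [Group G] [TopologicalSpace G] [IsTopologicalGroup G] [CompactSpace G]
    [MeasurableSpace G] [BorelSpace G]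
    (μ : Measure G) [IsProbabilityMeasure μ] [μ.IsMulLeftInvariant] [μ.IsMulRightInvariant]
    [μ.Regular]
    {H₁ H₂ : Type*} [NormedAddCommGroup H₁] [InnerProductSpace ℂ H₁] [FiniteDimensional ℂ H₁]
    [NormedAddCommGroup H₂] [InnerProductSpace ℂ H₂] [FiniteDimensional ℂ H₂]
    (ρ₁ : G →* (H₁ ≃ₗ[ℂ] H₁)) (ρ₂ : G →* (H₂ ≃ₗ[ℂ] H₂))
    (h₁cont : ∀ x : H₁, Continuous fun g => ρ₁ g x)
    (h₂cont : ∀ x : H₂, Continuous fun g => ρ₂ g x)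
    (h₁unitary : ∀ (g : G) (x y : H₁), ⟪ρ₁ g x, ρ₁ g y⟫_ℂ = ⟪x, y⟫_ℂ)
    (h₂unitary : ∀ (g : G) (x y : H₂), ⟪ρ₂ g x, ρ₂ g y⟫_ℂ = ⟪x, y⟫_ℂ)
    (h₁irr : Nontrivial H₁ ∧
      ∀ W : Submodule ℂ H₁, (∀ (g : G), ∀ x ∈ W, ρ₁ g x ∈ W) → W = ⊥ ∨ W = ⊤)
    (h₂irr : Nontrivial H₂ ∧
      ∀ W : Submodule ℂ H₂, (∀ (g : G), ∀ x ∈ W, ρ₂ g x ∈ W) → W = ⊥ ∨ W = ⊤)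
    (hinequiv : ¬ ∃ T : H₁ →L[ℂ] H₂,
      (∀ (g : G) (x : H₁), T (ρ₁ g x) = ρ₂ g (T x)) ∧ Function.Bijective T)
    (x₁ y₁ : H₁) (x₂ y₂ : H₂) :
    ∫ g, (starRingEnd ℂ) ⟪x₁, ρ₁ g y₁⟫_ℂ * ⟪x₂, ρ₂ g y₂⟫_ℂ ∂μ = 0 :=
  stmt3_general μ ρ₁ ρ₂ h₁cont h₂cont h₁unitary h₁irr h₂irr hinequiv x₁ y₁ x₂ y₂
end

section
/- (Schur orthogonality, equivalent case) Let (H, ρ) be a finite-dimensional irreducible unitary representation of a compact topological group G of dimension n, and let dg denote the normalized Haar measure on G. Then for all x₁, y₁, x₂, y₂ ∈ H, ∫_G conj(⟨x₁, ρ(g)y₁⟩) · ⟨x₂, ρ(g)y₂⟩ dg = (1/n) ⟨x₂, x₁⟩ ⟨y₁, y₂⟩. In particular, for an orthonormal basis (e_i) the matrix coefficients ρ_{ij}(g) = ⟨e_i, ρ(g)e_j⟩ satisfy ∫_G conj(ρ_{ij}(g)) ρ_{kl}(g) dg = (1/n) δ_{ik} δ_{jl}. -/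
/-!
Average the rank-one operator `z ↦ ⟪y₁, z⟫ • y₂` over the group:
`T = ∫ rankOne (ρ g y₂) (ρ g y₁) dg`. By unitarity its integrand is `ρ g ∘ rankOne y₂ y₁ ∘ ρ g⁻¹`,
so invariance of Haar measure makes `T` commute with every `ρ h`, and Schur's lemma makes it a
scalar `c`. Taking traces, `n c = ⟪y₁, y₂⟫`, and the integral to compute is `⟪x₂, T x₁⟫`.
-/

open scoped InnerProductSpace
open MeasureTheory

theorem Module.End.exists_eq_smul_one_of_forall_commute {K V ι : Type*} [Field K]
    [IsAlgClosed K] [AddCommGroup V] [Module K V] [FiniteDimensional K V] [Nontrivial V]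
    (ρ : ι → Module.End K V)
    (hirr : ∀ W : Submodule K V, (∀ i, ∀ x ∈ W, ρ i x ∈ W) → W = ⊥ ∨ W = ⊤)
    (T : Module.End K V) (hT : ∀ i, Commute T (ρ i)) : ∃ c : K, T = c • 1 := by
  obtain ⟨c, hc⟩ := T.exists_eigenvalue
  refine ⟨c, ?_⟩
  have hinv : ∀ i, ∀ x ∈ T.eigenspace c, ρ i x ∈ T.eigenspace c := fun i =>
    T.mapsTo_genEigenspace_of_comm (hT i) c 1
  rcases hirr _ hinv with hbot | htop
  · exact absurd hbot hc
  · ext x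
    exact Module.End.mem_eigenspace_iff.mp (htop ▸ Submodule.mem_top)

section RankOneAverage

open InnerProductSpace

variable {G H : Type*} [Group G] [TopologicalSpace G]
  [NormedAddCommGroup H] [InnerProductSpace ℂ H] [FiniteDimensional ℂ H]
  [MeasurableSpace G] {ρ : G →* (H ≃ₗ[ℂ] H)}

variable (ρ) in
noncomputable def rankOneAverage (μ : Measure G) (x y : H) : H →L[ℂ] H :=
  ∫ g, rankOne ℂ (ρ g x) (ρ g y) ∂μ

variable {μ : Measure G} [CompactSpace G] [BorelSpace G] [IsFiniteMeasure μ]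

theorem integrable_rankOne_orbit (hcont : ∀ x : H, Continuous fun g => ρ g x) (x y : H) :
    Integrable (fun g => rankOne ℂ (ρ g x) (ρ g y)) μ :=
  (continuous_clm_apply.mpr fun _ => ((hcont y).inner continuous_const).smul (hcont x))
    |>.integrable_of_hasCompactSupport (.of_compactSpace _)

theorem rankOneAverage_apply (hcont : ∀ x : H, Continuous fun g => ρ g x) (x y z : H) :
    rankOneAverage ρ μ x y z = ∫ g, ⟪ρ g y, z⟫_ℂ • ρ g x ∂μ :=
  ContinuousLinearMap.integral_apply (integrable_rankOne_orbit hcont x y) z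

theorem inner_rankOneAverage_apply (hcont : ∀ x : H, Continuous fun g => ρ g x)
    (x₁ y₁ x₂ y₂ : H) :
    ⟪x₂, rankOneAverage ρ μ y₂ y₁ x₁⟫_ℂ
      = ∫ g, (starRingEnd ℂ) ⟪x₁, ρ g y₁⟫_ℂ * ⟪x₂, ρ g y₂⟫_ℂ ∂μ := by
  rw [rankOneAverage_apply hcont, ← integral_inner]
  · simp_rw [inner_smul_right, inner_conj_symm]
  · exact (integrable_rankOne_orbit hcont y₂ y₁).apply_continuousLinearMap x₁

theorem commute_rankOneAverage [ContinuousMul G] [μ.IsMulLeftInvariant]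
    (hcont : ∀ x : H, Continuous fun g => ρ g x)
    (hunitary : ∀ (g : G) (x y : H), ⟪ρ g x, ρ g y⟫_ℂ = ⟪x, y⟫_ℂ) (x y : H) (h : G) :
    Commute (rankOneAverage ρ μ x y : Module.End ℂ H) (ρ h) := by
  ext z
  have hinner : ∀ g, ⟪ρ g y, ρ h z⟫_ℂ = ⟪ρ (h⁻¹ * g) y, z⟫_ℂ := fun g => by
    rw [← hunitary h (ρ (h⁻¹ * g) y), ← LinearEquiv.mul_apply, ← map_mul, mul_inv_cancel_left]
  calc rankOneAverage ρ μ x y (ρ h z)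
      = ∫ g, ⟪ρ (h⁻¹ * g) y, z⟫_ℂ • ρ g x ∂μ := by simp_rw [rankOneAverage_apply hcont, hinner]
    _ = ∫ g, ⟪ρ g y, z⟫_ℂ • ρ (h * g) x ∂μ := by
        simpa using integral_mul_left_eq_self (fun g => ⟪ρ g y, z⟫_ℂ • ρ (h * g) x) h⁻¹
    _ = ∫ g, (ρ h).toContinuousLinearEquiv (⟪ρ g y, z⟫_ℂ • ρ g x) ∂μ := by simp
    _ = ρ h (rankOneAverage ρ μ x y z) := by
        rw [ContinuousLinearEquiv.integral_comp_comm, rankOneAverage_apply hcont]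
        rfl

theorem trace_rankOneAverage [IsProbabilityMeasure μ] (hcont : ∀ x : H, Continuous fun g => ρ g x)
    (hunitary : ∀ (g : G) (x y : H), ⟪ρ g x, ρ g y⟫_ℂ = ⟪x, y⟫_ℂ) (x y : H) :
    LinearMap.trace ℂ H (rankOneAverage ρ μ x y) = ⟪y, x⟫_ℂ := by
  let trace : (H →L[ℂ] H) →L[ℂ] ℂ :=
    (LinearMap.trace ℂ H ∘ₗ ContinuousLinearMap.coeLM ℂ).toContinuousLinearMap
  calc LinearMap.trace ℂ H (rankOneAverage ρ μ x y)
      = ∫ g, trace (rankOne ℂ (ρ g x) (ρ g y)) ∂μ :=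
        (trace.integral_comp_comm (integrable_rankOne_orbit hcont x y)).symm
    _ = ⟪y, x⟫_ℂ := by simp [trace, trace_rankOne, hunitary]

theorem rankOneAverage_eq_smul_one [ContinuousMul G] [IsProbabilityMeasure μ]
    [μ.IsMulLeftInvariant] [Nontrivial H] (hcont : ∀ x : H, Continuous fun g => ρ g x)
    (hunitary : ∀ (g : G) (x y : H), ⟪ρ g x, ρ g y⟫_ℂ = ⟪x, y⟫_ℂ)
    (hirr : ∀ W : Submodule ℂ H, (∀ (g : G), ∀ x ∈ W, ρ g x ∈ W) → W = ⊥ ∨ W = ⊤) (x y : H) :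
    (rankOneAverage ρ μ x y : Module.End ℂ H) = (⟪y, x⟫_ℂ / Module.finrank ℂ H) • 1 := by
  obtain ⟨c, hc⟩ := Module.End.exists_eq_smul_one_of_forall_commute
    (fun g => (ρ g : Module.End ℂ H)) hirr _ (commute_rankOneAverage (μ := μ) hcont hunitary x y)
  have htrace : ⟪y, x⟫_ℂ = c * Module.finrank ℂ H := by
    rw [← trace_rankOneAverage (μ := μ) hcont hunitary, hc, map_smul, LinearMap.trace_one,
      smul_eq_mul]
  rw [hc, htrace, mul_div_cancel_right₀ _ (Nat.cast_ne_zero.mpr Module.finrank_pos.ne')]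

end RankOneAverage

theorem stmt4_general {G : Type*} [Group G] [TopologicalSpace G] [IsTopologicalGroup G] [CompactSpace G]
    [MeasurableSpace G] [BorelSpace G]
    (μ : Measure G) [IsProbabilityMeasure μ] [μ.IsMulLeftInvariant]
    {H : Type*} [NormedAddCommGroup H] [InnerProductSpace ℂ H] [FiniteDimensional ℂ H]
    (n : ℕ) (hn : Module.finrank ℂ H = n)
    (ρ : G →* (H ≃ₗ[ℂ] H))
    (hcont : ∀ x : H, Continuous fun g => ρ g x)
    (hunitary : ∀ (g : G) (x y : H), ⟪ρ g x, ρ g y⟫_ℂ = ⟪x, y⟫_ℂ)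
    (hirr : Nontrivial H ∧
      ∀ W : Submodule ℂ H, (∀ (g : G), ∀ x ∈ W, ρ g x ∈ W) → W = ⊥ ∨ W = ⊤) :
    (∀ x₁ y₁ x₂ y₂ : H,
      ∫ g, (starRingEnd ℂ) ⟪x₁, ρ g y₁⟫_ℂ * ⟪x₂, ρ g y₂⟫_ℂ ∂μ
        = (1 / (n : ℂ)) * (⟪x₂, x₁⟫_ℂ * ⟪y₁, y₂⟫_ℂ)) ∧
    (∀ (e : OrthonormalBasis (Fin n) ℂ H) (i j k l : Fin n),
      ∫ g, (starRingEnd ℂ) ⟪e i, ρ g (e j)⟫_ℂ * ⟪e k, ρ g (e l)⟫_ℂ ∂μ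
        = (1 / (n : ℂ)) * (if i = k then 1 else 0) * (if j = l then 1 else 0)) := by
  obtain ⟨_, hirr⟩ := hirr
  have schur : ∀ x₁ y₁ x₂ y₂ : H,
      ∫ g, (starRingEnd ℂ) ⟪x₁, ρ g y₁⟫_ℂ * ⟪x₂, ρ g y₂⟫_ℂ ∂μ
        = (1 / (n : ℂ)) * (⟪x₂, x₁⟫_ℂ * ⟪y₁, y₂⟫_ℂ) := by
    intro x₁ y₁ x₂ y₂
    rw [← inner_rankOneAverage_apply hcont, ← ContinuousLinearMap.coe_coe,
      rankOneAverage_eq_smul_one hcont hunitary hirr, hn]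
    simp only [LinearMap.smul_apply, Module.End.one_apply, inner_smul_right]
    ring
  refine ⟨schur, fun e i j k l => ?_⟩
  simp only [schur, orthonormal_iff_ite.mp e.orthonormal]
  split_ifs <;> simp_all [eq_comm]

/-- Schur orthogonality, equivalent case: for a finite-dimensional irreducible unitary
representation (H, ρ) of a compact group G of dimension n,
∫ conj⟪x₁, ρ(g)y₁⟫ ⟪x₂, ρ(g)y₂⟫ dg = (1/n) ⟪x₂, x₁⟫ ⟪y₁, y₂⟫, and in particular for an
orthonormal basis the matrix coefficients satisfy
∫ conj(ρᵢⱼ) ρₖₗ dg = (1/n) δᵢₖ δⱼₗ. -/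
theorem stmt4 {G : Type*} [Group G] [TopologicalSpace G] [IsTopologicalGroup G] [CompactSpace G]
    [MeasurableSpace G] [BorelSpace G]
    (μ : Measure G) [IsProbabilityMeasure μ] [μ.IsMulLeftInvariant] [μ.IsMulRightInvariant]
    [μ.Regular]
    {H : Type*} [NormedAddCommGroup H] [InnerProductSpace ℂ H] [FiniteDimensional ℂ H]
    (n : ℕ) (hn : Module.finrank ℂ H = n)
    (ρ : G →* (H ≃ₗ[ℂ] H))
    (hcont : ∀ x : H, Continuous fun g => ρ g x)
    (hunitary : ∀ (g : G) (x y : H), ⟪ρ g x, ρ g y⟫_ℂ = ⟪x, y⟫_ℂ)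
    (hirr : Nontrivial H ∧
      ∀ W : Submodule ℂ H, (∀ (g : G), ∀ x ∈ W, ρ g x ∈ W) → W = ⊥ ∨ W = ⊤) :
    (∀ x₁ y₁ x₂ y₂ : H,
      ∫ g, (starRingEnd ℂ) ⟪x₁, ρ g y₁⟫_ℂ * ⟪x₂, ρ g y₂⟫_ℂ ∂μ
        = (1 / (n : ℂ)) * (⟪x₂, x₁⟫_ℂ * ⟪y₁, y₂⟫_ℂ)) ∧
    (∀ (e : OrthonormalBasis (Fin n) ℂ H) (i j k l : Fin n),
      ∫ g, (starRingEnd ℂ) ⟪e i, ρ g (e j)⟫_ℂ * ⟪e k, ρ g (e l)⟫_ℂ ∂μ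
        = (1 / (n : ℂ)) * (if i = k then 1 else 0) * (if j = l then 1 else 0)) :=
  stmt4_general μ n hn ρ hcont hunitary hirr
end

section
/- For each n ∈ ℕ, the action of SU(2) on the space H^n of homogeneous complex polynomials of degree n in two variables, given by (ρ(g) f)(z) = f(g⁻¹ z) for g ∈ SU(2) and z ∈ ℂ², is a representation of SU(2), and this representation is irreducible: H^n ≠ {0} and the only subspaces W ⊆ H^n with ρ(g)W ⊆ W for all g ∈ SU(2) are {0} and H^n. -/
/-!
The diagonal element `diag(u, u⁻¹)` of SU(2), with `u = exp i` of infinite order (π is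
irrational), acts on the monomial `X^e` by the scalar `u ^ (e₀ - e₁)`. These weights are pairwise
distinct on monomials of degree `n`, so by Lagrange interpolation in this operator an invariant
subspace `W ⊆ Hⁿ` contains every monomial occurring in one of its elements. The rotation
`r = [[3/5, -4/5], [4/5, 3/5]]` has no zero entry: hence `r • X^e` has a nonzero coefficient at
`X₀ⁿ`, which puts `X₀ⁿ` in `W`, and `r • X₀ⁿ = (3/5 X₀ - 4/5 X₁)ⁿ` involves every monomial of
degree `n`, which puts all of them in `W`.
-/

open MvPolynomial Matrix

theorem Submodule.aeval_apply_mem {R M : Type*} [CommSemiring R] [AddCommMonoid M] [Module R M]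
    {T : Module.End R M} {W : Submodule R M} (hW : ∀ w ∈ W, T w ∈ W) (q : Polynomial R)
    {w : M} (hw : w ∈ W) : Polynomial.aeval T q w ∈ W := by
  induction q using Polynomial.induction_on' with
  | add p q hp hq => simpa using add_mem hp hq
  | monomial k a =>
    rw [Polynomial.aeval_monomial, Module.End.mul_apply, Module.algebraMap_end_apply]
    refine W.smul_mem a ?_
    induction k with
    | zero => simpa
    | succ k ih => rw [pow_succ', Module.End.mul_apply]; exact hW _ ih

theorem Submodule.mem_of_sum_mem_of_apply_eq_smul {K V ι : Type*} [Field K] [AddCommGroup V]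
    [Module K V] [DecidableEq ι] {T : Module.End K V} {W : Submodule K V}
    (hW : ∀ w ∈ W, T w ∈ W) {s : Finset ι} {μ : ι → K} (hμ : Set.InjOn μ s) {v : ι → V}
    (hv : ∀ i ∈ s, T (v i) = μ i • v i) (hsum : ∑ i ∈ s, v i ∈ W) {i : ι} (hi : i ∈ s) :
    v i ∈ W := by
  have hproj : Polynomial.aeval T (Lagrange.basis s μ i) (∑ j ∈ s, v j) = v i := by
    rw [map_sum, Finset.sum_eq_single i]
    · rw [Module.End.aeval_apply_of_mem_apply_eq_smul (hv i hi),
        Lagrange.eval_basis_self hμ hi, one_smul]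
    · intro j hj hji
      rw [Module.End.aeval_apply_of_mem_apply_eq_smul (hv j hj),
        Lagrange.eval_basis_of_ne hji.symm hj, zero_smul]
    · exact fun h => absurd hi h
  exact hproj ▸ Submodule.aeval_apply_mem hW _ hsum

theorem Matrix.toMvPolynomial_eq_sum_C_mul_X {n R : Type*} [Fintype n] [CommSemiring R]
    (M : Matrix n n R) (i : n) : M.toMvPolynomial i = ∑ j, C (M i j) * X j := by
  simp only [Matrix.toMvPolynomial, C_mul_X_eq_monomial]

theorem MvPolynomial.bind₁_toMvPolynomial_mul {n R : Type*} [Fintype n] [CommSemiring R]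
    (M N : Matrix n n R) (f : MvPolynomial n R) :
    bind₁ (M * N).toMvPolynomial f = bind₁ N.toMvPolynomial (bind₁ M.toMvPolynomial f) := by
  rw [bind₁_bind₁]
  exact congrArg (bind₁ · f) (_root_.funext (Matrix.toMvPolynomial_mul M N))

theorem MvPolynomial.IsHomogeneous.bind₁_toMvPolynomial {n R : Type*} [Fintype n] [CommSemiring R]
    {f : MvPolynomial n R} {m : ℕ} (hf : f.IsHomogeneous m) (M : Matrix n n R) :
    (bind₁ M.toMvPolynomial f).IsHomogeneous m := by
  simpa using hf.aeval _ (Matrix.toMvPolynomial_isHomogeneous M)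

theorem MvPolynomial.eval_bind₁_toMvPolynomial {n R : Type*} [Fintype n] [CommSemiring R]
    (M : Matrix n n R) (c : n → R) (f : MvPolynomial n R) :
    eval c (bind₁ M.toMvPolynomial f) = eval (M *ᵥ c) f := by
  change aeval c (bind₁ M.toMvPolynomial f) = aeval (M *ᵥ c) f
  rw [aeval_bind₁]
  exact congrArg (aeval · f) (_root_.funext fun i => Matrix.toMvPolynomial_eval_eq_apply M i c)

theorem MvPolynomial.bind₁_toMvPolynomial_diagonal_monomial {n R : Type*} [Fintype n]
    [DecidableEq n] [CommSemiring R] (d : n → R) (e : n →₀ ℕ) (c : R) :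
    bind₁ (Matrix.diagonal d).toMvPolynomial (monomial e c)
      = (e.prod fun i k => d i ^ k) • monomial e c := by
  have hX : ∀ i, (Matrix.diagonal d).toMvPolynomial i = C (d i) * X i := by
    intro i
    rw [Matrix.toMvPolynomial_eq_sum_C_mul_X, Finset.sum_eq_single i]
    · rw [diagonal_apply_eq]
    · intro j _ hji
      rw [diagonal_apply_ne d hji.symm, map_zero, zero_mul]
    · simp
  rw [bind₁_monomial, monomial_eq]
  unfold Finsupp.prod
  simp only [hX, mul_pow, Finset.prod_mul_distrib, ← map_pow, ← map_prod, smul_eq_C_mul]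
  ring

theorem MvPolynomial.IsHomogeneous.coeff_single_eq_eval {σ R : Type*} [CommSemiring R]
    [DecidableEq σ] {p : MvPolynomial σ R} {n : ℕ} (hp : p.IsHomogeneous n) (i : σ) :
    coeff (Finsupp.single i n) p = eval (Pi.single i 1) p := by
  conv_rhs => rw [p.as_sum, map_sum]
  rw [Finset.sum_eq_single (Finsupp.single i n)]
  · simp [eval_monomial]
  · intro e he hne
    obtain ⟨j, hji, hj⟩ : ∃ j ≠ i, e j ≠ 0 := by
      by_contra! h
      have he_single : e = Finsupp.single i (e i) := by
        ext j
        by_cases hji : j = i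
        · simp [hji]
        · simp [h j hji, Finsupp.single_eq_of_ne hji]
      have hei : e i = n := by
        rw [hp.degree_eq_sum_deg_support he, ← Finsupp.degree_apply, he_single,
          Finsupp.degree_single, Finsupp.single_eq_same]
      exact hne (hei ▸ he_single)
    rw [eval_monomial, Finsupp.prod, Finset.prod_eq_zero (Finsupp.mem_support_iff.2 hj), mul_zero]
    rw [Pi.single_eq_of_ne hji, zero_pow hj]
  · intro h
    rw [notMem_support_iff.1 h, map_zero, map_zero]

theorem MvPolynomial.coeff_single_bind₁_toMvPolynomial_monomial {σ R : Type*} [Fintype σ]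
    [DecidableEq σ] [CommSemiring R] (A : Matrix σ σ R) {e : σ →₀ ℕ} {n : ℕ} (he : e.degree = n)
    (i : σ) :
    coeff (Finsupp.single i n) (bind₁ A.toMvPolynomial (monomial e 1))
      = e.prod fun j k => A j i ^ k := by
  rw [((isHomogeneous_monomial 1 he).bind₁_toMvPolynomial A).coeff_single_eq_eval,
    eval_bind₁_toMvPolynomial, eval_monomial, one_mul]
  simp

theorem MvPolynomial.coeff_bind₁_toMvPolynomial_X_pow {σ R : Type*} [Fintype σ]
    [CommSemiring R] (A : Matrix σ σ R) (i : σ) (n : ℕ) (s : σ →₀ ℕ) :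
    coeff s (bind₁ A.toMvPolynomial (X i ^ n))
      = if s.degree = n then s.multinomial * s.prod fun j k => A i j ^ k else 0 := by
  have : A.toMvPolynomial i = ∑ j, A i j • X j := by
    simp only [Matrix.toMvPolynomial, smul_monomial, smul_eq_mul, mul_one, X]
  rw [map_pow, bind₁_X_right, this, coeff_linearCombination_X_pow_of_fintype]
  rfl

theorem Circle.exp_one_zpow_injective : Function.Injective fun k : ℤ => Circle.exp 1 ^ k := by
  intro k l hkl
  simp only [← Circle.exp_intCast_mul, mul_one] at hkl
  obtain ⟨m, hm⟩ := Circle.exp_eq_exp.1 hkl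
  rcases eq_or_ne m 0 with rfl | hm0
  · exact_mod_cast (by simpa using hm : (k : ℝ) = l)
  · refine absurd ?_ (irrational_pi.ne_rational (k - l) (2 * m))
    push_cast
    field_simp
    linarith

theorem Circle.diagonal_mem_specialUnitaryGroup (u : Circle) :
    diagonal ![(u : ℂ), ↑u⁻¹] ∈ specialUnitaryGroup (Fin 2) ℂ := by
  have hu : star (u : ℂ) = ↑u⁻¹ := (Circle.coe_inv_eq_conj u).symm
  rw [mem_specialUnitaryGroup_iff, mem_unitaryGroup_iff', star_eq_conjTranspose,
    diagonal_conjTranspose, diagonal_mul_diagonal, det_diagonal, Fin.prod_univ_two]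
  refine ⟨?_, by simp⟩
  rw [← diagonal_one]
  congr 1
  ext i
  fin_cases i <;> simp [hu]

theorem Circle.prod_pow_eq_zpow_sub (u : Circle) (e : Fin 2 →₀ ℕ) :
    (e.prod fun i k => ![(u : ℂ), ↑u⁻¹] i ^ k) = ↑(u ^ ((e 0 : ℤ) - e 1)) := by
  rw [Finsupp.prod_pow, Fin.prod_univ_two, _root_.zpow_sub, zpow_natCast, zpow_natCast]
  simp

theorem Finsupp.injOn_sub_setOf_degree_eq (n : ℕ) :
    Set.InjOn (fun e : Fin 2 →₀ ℕ => (e 0 : ℤ) - e 1) {e | e.degree = n} := by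
  intro e he e' he' hee'
  simp only [Set.mem_ofPred_eq, Finsupp.degree_eq_sum, Fin.sum_univ_two] at he he' hee'
  ext i
  fin_cases i <;> simp <;> omega

theorem Matrix.specialUnitaryGroup.inv_coe {n α : Type*} [Fintype n] [DecidableEq n] [CommRing α]
    [StarRing α] (g : specialUnitaryGroup n α) : (g : Matrix n n α)⁻¹ = ↑g⁻¹ :=
  Matrix.inv_eq_left_inv (congrArg Subtype.val (inv_mul_cancel g))

namespace SU2

noncomputable def pythagoreanRotation : Matrix (Fin 2) (Fin 2) ℂ := !![3 / 5, -4 / 5; 4 / 5, 3 / 5]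

theorem pythagoreanRotation_mem_specialUnitaryGroup :
    pythagoreanRotation ∈ specialUnitaryGroup (Fin 2) ℂ := by
  rw [mem_specialUnitaryGroup_iff, mem_unitaryGroup_iff', star_eq_conjTranspose,
    pythagoreanRotation, det_fin_two_of]
  refine ⟨?_, by norm_num⟩
  ext i j
  fin_cases i <;> fin_cases j <;> simp [Matrix.mul_apply, Fin.sum_univ_two, map_ofNat] <;> norm_num

theorem pythagoreanRotation_apply_ne_zero (i j : Fin 2) : pythagoreanRotation i j ≠ 0 := by
  fin_cases i <;> fin_cases j <;> simp [pythagoreanRotation]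

section Invariant

variable {n : ℕ} {W : Submodule ℂ (MvPolynomial (Fin 2) ℂ)}
  (hW : W ≤ homogeneousSubmodule (Fin 2) ℂ n)
  (hinv : ∀ g ∈ specialUnitaryGroup (Fin 2) ℂ, ∀ f ∈ W, bind₁ g.toMvPolynomial f ∈ W)
include hW hinv

theorem monomial_mem_of_coeff_ne_zero {f : MvPolynomial (Fin 2) ℂ} (hf : f ∈ W)
    {e : Fin 2 →₀ ℕ} (he : coeff e f ≠ 0) : monomial e 1 ∈ W := by
  set u := Circle.exp 1
  have hdeg : ∀ d ∈ f.support, d.degree = n := fun d hd =>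
    ((hW hf).degree_eq_sum_deg_support hd).symm
  have hterm : monomial e (coeff e f) ∈ W := by
    refine Submodule.mem_of_sum_mem_of_apply_eq_smul
      (T := (bind₁ (diagonal ![(u : ℂ), ↑u⁻¹]).toMvPolynomial).toLinearMap)
      (hinv _ (Circle.diagonal_mem_specialUnitaryGroup u))
      (μ := fun d : Fin 2 →₀ ℕ => ↑(u ^ ((d 0 : ℤ) - d 1)))
      (v := fun d => monomial d (coeff d f)) ?_ ?_ (f.as_sum ▸ hf) (mem_support_iff.2 he)
    · intro d hd d' hd' hdd'
      exact Finsupp.injOn_sub_setOf_degree_eq n (hdeg d hd) (hdeg d' hd')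
        (Circle.exp_one_zpow_injective (Circle.coe_injective hdd'))
    · intro d _
      simp only [AlgHom.toLinearMap_apply, bind₁_toMvPolynomial_diagonal_monomial,
        Circle.prod_pow_eq_zpow_sub]
  simpa [smul_monomial, he] using W.smul_mem (coeff e f)⁻¹ hterm

theorem X_zero_pow_mem_of_monomial_mem {e : Fin 2 →₀ ℕ} (he : e.degree = n)
    (hmem : monomial e 1 ∈ W) : X 0 ^ n ∈ W := by
  rw [X_pow_eq_monomial]
  refine monomial_mem_of_coeff_ne_zero hW hinv
    (hinv _ pythagoreanRotation_mem_specialUnitaryGroup _ hmem) ?_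
  rw [coeff_single_bind₁_toMvPolynomial_monomial _ he]
  exact Finset.prod_ne_zero_iff.2 fun j _ => pow_ne_zero _ (pythagoreanRotation_apply_ne_zero j 0)

theorem monomial_mem_of_X_zero_pow_mem (hmem : X 0 ^ n ∈ W) {e : Fin 2 →₀ ℕ}
    (he : e.degree = n) : monomial e 1 ∈ W := by
  refine monomial_mem_of_coeff_ne_zero hW hinv
    (hinv _ pythagoreanRotation_mem_specialUnitaryGroup _ hmem) ?_
  rw [coeff_bind₁_toMvPolynomial_X_pow, if_pos he]
  refine mul_ne_zero (Nat.cast_ne_zero.2 (Nat.multinomial_pos _ _).ne') ?_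
  exact Finset.prod_ne_zero_iff.2 fun j _ => pow_ne_zero _ (pythagoreanRotation_apply_ne_zero 0 j)

theorem eq_bot_or_eq_homogeneousSubmodule : W = ⊥ ∨ W = homogeneousSubmodule (Fin 2) ℂ n := by
  refine or_iff_not_imp_left.2 fun hbot => le_antisymm hW fun p hp => ?_
  obtain ⟨f, hfW, hf0⟩ := Submodule.exists_mem_ne_zero_of_ne_bot hbot
  obtain ⟨e, he⟩ := ne_zero_iff.1 hf0
  have hXn : X 0 ^ n ∈ W := X_zero_pow_mem_of_monomial_mem hW hinv
    ((hW hfW).degree_eq_sum_deg_support (mem_support_iff.2 he)).symm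
    (monomial_mem_of_coeff_ne_zero hW hinv hfW he)
  rw [p.as_sum]
  refine W.sum_mem fun d hd => ?_
  have := monomial_mem_of_X_zero_pow_mem hW hinv hXn
    ((hp : p.IsHomogeneous n).degree_eq_sum_deg_support hd).symm
  simpa [smul_monomial] using W.smul_mem (coeff d p) this

end Invariant

end SU2

/-- The action of SU(2) on the space Hⁿ of homogeneous complex polynomials of degree n in
two variables, (ρ(g) f)(z) = f(g⁻¹ z), is a representation of SU(2), and this
representation is irreducible. -/
theorem stmt9 (n : ℕ)
    (ρ : Matrix.specialUnitaryGroup (Fin 2) ℂ →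
      MvPolynomial (Fin 2) ℂ →ₗ[ℂ] MvPolynomial (Fin 2) ℂ)
    (hρ : ∀ (g : Matrix.specialUnitaryGroup (Fin 2) ℂ) (f : MvPolynomial (Fin 2) ℂ),
      ρ g f = aeval
        (fun i => ∑ j, C (((g : Matrix (Fin 2) (Fin 2) ℂ))⁻¹ i j) * X j) f) :
    (∀ f : MvPolynomial (Fin 2) ℂ, ρ 1 f = f) ∧
    (∀ (g h : Matrix.specialUnitaryGroup (Fin 2) ℂ) (f : MvPolynomial (Fin 2) ℂ),
      ρ (g * h) f = ρ g (ρ h f)) ∧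
    (∀ (g : Matrix.specialUnitaryGroup (Fin 2) ℂ),
      ∀ f ∈ homogeneousSubmodule (Fin 2) ℂ n, ρ g f ∈ homogeneousSubmodule (Fin 2) ℂ n) ∧
    (homogeneousSubmodule (Fin 2) ℂ n ≠ ⊥) ∧
    (∀ W : Submodule ℂ (MvPolynomial (Fin 2) ℂ), W ≤ homogeneousSubmodule (Fin 2) ℂ n →
      (∀ (g : Matrix.specialUnitaryGroup (Fin 2) ℂ), ∀ f ∈ W, ρ g f ∈ W) →
      W = ⊥ ∨ W = homogeneousSubmodule (Fin 2) ℂ n) := by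
  have hρ' : ∀ g f, ρ g f = bind₁ (↑g⁻¹ : Matrix (Fin 2) (Fin 2) ℂ).toMvPolynomial f := by
    intro g f
    simp only [hρ, specialUnitaryGroup.inv_coe, ← toMvPolynomial_eq_sum_C_mul_X, aeval_eq_bind₁]
  refine ⟨fun f => ?_, fun g h f => ?_, fun g f hf => ?_, ?_, fun W hW hWinv => ?_⟩
  · simp [hρ']
  · rw [hρ', hρ', hρ', _root_.mul_inv_rev, Submonoid.coe_mul, bind₁_toMvPolynomial_mul]
  · rw [hρ']
    exact IsHomogeneous.bind₁_toMvPolynomial hf _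
  · refine (Submodule.ne_bot_iff _).2 ⟨X 0 ^ n, ?_, pow_ne_zero _ (X_ne_zero 0)⟩
    simpa using (isHomogeneous_X ℂ (0 : Fin 2)).pow n
  · refine SU2.eq_bot_or_eq_homogeneousSubmodule hW fun g hg f hf => ?_
    simpa [hρ'] using hWinv ⟨g, hg⟩⁻¹ f hf
end
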